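/- arXiv:1704.02401 — 4 statements merged into one kernel-verified Lean document; each statement's English description precedes it below -/
import Mathlib

section
/- Let G be a group, M a commutative group (written multiplicatively), and α a normalized 3-cocycle on G with values in M. Then for all x, y, z, w ∈ G the following three identities hold: (i) α(x,yz|w)·α(y,z|w) = α(xy,z|w)·α(x,y|zwz⁻¹); (ii) α(xy|z,w)·α(x,y|z)·α(x,y|w) = α(x,y|zw)·α(y|z,w)·α(x|yzy⁻¹,ywy⁻¹); (iii) α(y,z,w)·α(x|yz,w)·α(x|y,z) = α(x|y,zw)·α(x|z,w)·α(xyx⁻¹,xzx⁻¹,xwx⁻¹). -/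
/-- `α(x,y|z) = α(x,yzy⁻¹,y) · α(x,y,z)⁻¹ · α(xyz(xy)⁻¹,x,y)⁻¹`. -/
def cocycleBar {G M : Type*} [Group G] [CommGroup M] (α : G → G → G → M)
    (x y z : G) : M :=
  α x (y * z * y⁻¹) y * (α x y z)⁻¹ * (α (x * y * z * (x * y)⁻¹) x y)⁻¹

/-- `α(x|y,z) = α(x,y,z) · α(xyx⁻¹,xzx⁻¹,x) · α(xyx⁻¹,x,z)⁻¹`. -/
def cocycleFore {G M : Type*} [Group G] [CommGroup M] (α : G → G → G → M)
    (x y z : G) : M :=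
  α x y z * α (x * y * x⁻¹) (x * z * x⁻¹) x * (α (x * y * x⁻¹) x z)⁻¹

theorem three_identities_from_cocycle {G M : Type*} [Group G] [CommGroup M]
    (α : G → G → G → M)
    (hcoc : ∀ x y z w : G,
      α y z w * α x (y * z) w * α x y z = α x y (z * w) * α (x * y) z w)
    (hnorm : ∀ x y z : G, x = 1 ∨ y = 1 ∨ z = 1 → α x y z = 1) :
    (∀ x y z w : G,
      cocycleBar α x (y * z) w * cocycleBar α y z w
        = cocycleBar α (x * y) z w * cocycleBar α x y (z * w * z⁻¹)) ∧
    (∀ x y z w : G,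
      cocycleFore α (x * y) z w * cocycleBar α x y z * cocycleBar α x y w
        = cocycleBar α x y (z * w) * cocycleFore α y z w *
            cocycleFore α x (y * z * y⁻¹) (y * w * y⁻¹)) ∧
    (∀ x y z w : G,
      α y z w * cocycleFore α x (y * z) w * cocycleFore α x y z
        = cocycleFore α x y (z * w) * cocycleFore α x z w *
            α (x * y * x⁻¹) (x * z * x⁻¹) (x * w * x⁻¹)) := by
  have hn1 : ∀ b c : G, α 1 b c = 1 := fun b c => hnorm 1 b c (Or.inl rfl)
  have hn2 : ∀ a c : G, α a 1 c = 1 := fun a c => hnorm a 1 c (Or.inr (Or.inl rfl))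
  have hn3 : ∀ a b : G, α a b 1 = 1 := fun a b => hnorm a b 1 (Or.inr (Or.inr rfl))
  refine ⟨fun x y z w => ?_, fun x y z w => ?_, fun x y z w => ?_⟩
  ·
    have h1 := hcoc (x) (y * (z * (w * (z⁻¹ * (y⁻¹))))) (y) (z)
    have h2 := hcoc (x * (y * (z * (w * (z⁻¹ * (y⁻¹ * (x⁻¹))))))) (x) (y) (z)
    have h3 := hcoc (x) (y) (z) (w)
    have h4 := hcoc (x) (y) (z * (w * (z⁻¹))) (z)
    simp only [cocycleBar, cocycleFore, mul_assoc, mul_inv_rev, inv_inv, one_mul, mul_one, inv_one, mul_inv_cancel, inv_mul_cancel, mul_inv_cancel_left, inv_mul_cancel_left, hn1, hn2, hn3] at h1 h2 h3 h4 ⊢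
    apply Additive.ofMul.injective
    have ah1 := congrArg Additive.ofMul h1
    have ah2 := congrArg Additive.ofMul h2
    have ah3 := congrArg Additive.ofMul h3
    have ah4 := congrArg Additive.ofMul h4
    simp only [ofMul_mul, ofMul_inv] at ah1 ah2 ah3 ah4 ⊢
    linear_combination (norm := abel) -ah1 + ah2 - ah3 + ah4
  ·
    have h1 := hcoc (x * (y * (z * (y⁻¹ * (x⁻¹))))) (x * (y * (w * (y⁻¹ * (x⁻¹))))) (x) (y)
    have h2 := hcoc (x) (y) (z) (w)
    have h3 := hcoc (x) (y * (z * (y⁻¹))) (y) (w)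
    have h4 := hcoc (x) (y * (z * (y⁻¹))) (y * (w * (y⁻¹))) (y)
    have h5 := hcoc (x * (y * (z * (y⁻¹ * (x⁻¹))))) (x) (y) (w)
    have h6 := hcoc (x * (y * (z * (y⁻¹ * (x⁻¹))))) (x) (y * (w * (y⁻¹))) (y)
    simp only [cocycleBar, cocycleFore, mul_assoc, mul_inv_rev, inv_inv, one_mul, mul_one, inv_one, mul_inv_cancel, inv_mul_cancel, mul_inv_cancel_left, inv_mul_cancel_left, hn1, hn2, hn3] at h1 h2 h3 h4 h5 h6 ⊢
    apply Additive.ofMul.injective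
    have ah1 := congrArg Additive.ofMul h1
    have ah2 := congrArg Additive.ofMul h2
    have ah3 := congrArg Additive.ofMul h3
    have ah4 := congrArg Additive.ofMul h4
    have ah5 := congrArg Additive.ofMul h5
    have ah6 := congrArg Additive.ofMul h6
    simp only [ofMul_mul, ofMul_inv] at ah1 ah2 ah3 ah4 ah5 ah6 ⊢
    linear_combination (norm := abel) -ah1 - ah2 + ah3 - ah4 - ah5 + ah6
  ·
    have h1 := hcoc (x) (y) (z) (w)
    have h2 := hcoc (x * (y * (x⁻¹))) (x) (z) (w)
    have h3 := hcoc (x * (y * (x⁻¹))) (x * (z * (x⁻¹))) (x) (w)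
    have h4 := hcoc (x * (y * (x⁻¹))) (x * (z * (x⁻¹))) (x * (w * (x⁻¹))) (x)
    simp only [cocycleBar, cocycleFore, mul_assoc, mul_inv_rev, inv_inv, one_mul, mul_one, inv_one, mul_inv_cancel, inv_mul_cancel, mul_inv_cancel_left, inv_mul_cancel_left, hn1, hn2, hn3] at h1 h2 h3 h4 ⊢
    apply Additive.ofMul.injective
    have ah1 := congrArg Additive.ofMul h1
    have ah2 := congrArg Additive.ofMul h2
    have ah3 := congrArg Additive.ofMul h3
    have ah4 := congrArg Additive.ofMul h4
    simp only [ofMul_mul, ofMul_inv] at ah1 ah2 ah3 ah4 ⊢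
    linear_combination (norm := abel) ah1 - ah2 + ah3 - ah4
end

section
/- Let B be an abelian group and β : B × B → ℚ/ℤ a normalized 2-cochain (β(0,y) = β(x,0) = 0 for all x,y). Let α := dβ be its coboundary, i.e. α(x,y,z) = β(y,z) − β(x+y,z) + β(x,y+z) − β(x,y). Then α is soft: for every g ∈ B there exists a function c : B → ℚ/ℤ such that c(x) + c(y) + α(x,y|g) = c(x+y) for all x,y ∈ B, where α(x,y|g) := α(x,g,y) − α(x,y,g) − α(g,x,y). -/
/-- ℚ/ℤ. -/
abbrev QZ := AddCircle (1 : ℚ)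

theorem coboundary_is_soft {B : Type*} [AddCommGroup B]
    (β : B → B → QZ)
    (hnorm : ∀ x y : B, β 0 y = 0 ∧ β x 0 = 0) :
    -- α = dβ
    let α : B → B → B → QZ :=
      fun x y z => β y z - β (x + y) z + β x (y + z) - β x y
    -- α(x,y|g) (abelian case)
    let αbar : B → B → B → QZ := fun x y g => α x g y - α x y g - α g x y
    -- softness
    ∀ g : B, ∃ c : B → QZ, ∀ x y : B, c x + c y + αbar x y g = c (x + y) := by
  intro α αbar g
  refine ⟨fun x => β x g - β g x, fun x y => ?_⟩
  simp only [α, αbar]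
  rw [add_comm g x, add_comm g y]
  abel
end

section
/- Let ℓ ≥ 1 be a natural number, and let q_ℓ : ℤ/2^ℓℤ → ℚ/ℤ be the quadratic function q_ℓ(x) = (x̄² / 2^(ℓ+1)) mod ℤ, where x̄ is the canonical representative of x in {0,…,2^ℓ−1}. For an integer m, there exists a function ς : ℤ/2^ℓℤ × ℤ/2^ℓℤ → ℚ/ℤ, additive in each variable, with m • q_ℓ(x) = ς(x,x) for all x, if and only if m is even. (Equivalently, J(ℤ/2^ℓℤ) := coker(Hom(B ⊗ B, ℚ/ℤ) → Q(B,ℚ/ℤ)) for B = ℤ/2^ℓℤ is cyclic of order 2.) -/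
/-- A biadditive form on an abelian group with values in ℚ/ℤ. -/
def IsBiadditive {A : Type*} [AddCommGroup A] (ς : A → A → QZ) : Prop :=
  (∀ x x' y : A, ς (x + x') y = ς x y + ς x' y) ∧
  (∀ x y y' : A, ς x (y + y') = ς x y + ς x y')

/-- The standard generator `q_ℓ(x) = x̄²/2^(ℓ+1)` of the group of quadratic
functions on `ℤ/2^ℓℤ`. -/
noncomputable def qGen (ℓ : ℕ) (x : ZMod (2 ^ ℓ)) : QZ :=
  (((x.val ^ 2 : ℚ) / 2 ^ (ℓ + 1) : ℚ) : QZ)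

/-!
If `m • q_ℓ` is the diagonal of a biadditive `ς`, then evaluating at `x = 1` gives
`m/2 = 2^ℓ • m • q_ℓ(1) = 2^ℓ • ς(1, 1) = ς(2^ℓ • 1, 1) = 0` in `ℚ/ℤ`, so `m` is even.
Conversely `2 • q_ℓ(x) = x̄²/2^ℓ` is the diagonal of the biadditive form `(x, y) ↦ x̄ȳ/2^ℓ`,
which is multiplication on `ℤ/2^ℓℤ` followed by the embedding `ℤ/2^ℓℤ ↪ ℚ/ℤ`.
-/

namespace IsBiadditive

variable {A : Type*} [AddCommGroup A] {ς : A → A → QZ}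

theorem nsmul_left (h : IsBiadditive ς) (n : ℕ) (x y : A) : ς (n • x) y = n • ς x y :=
  map_nsmul (AddMonoidHom.mk' (ς · y) (h.1 · · y)) n x

theorem nsmul_eq_zero_of_nsmul_eq_zero (h : IsBiadditive ς) {n : ℕ} {x : A} (hx : n • x = 0)
    (y : A) : n • ς x y = 0 := by
  rw [← h.nsmul_left, hx]
  simpa using h.nsmul_left 0 0 y

theorem zsmul (h : IsBiadditive ς) (k : ℤ) : IsBiadditive fun x y => k • ς x y :=
  ⟨fun x x' y => by simp only [h.1 x x' y, smul_add],
    fun x y y' => by simp only [h.2 x y y', smul_add]⟩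

theorem of_mul {R : Type*} [NonUnitalRing R] (f : R →+ QZ) : IsBiadditive fun x y => f (x * y) :=
  ⟨fun x x' y => by simp only [add_mul, map_add], fun x y y' => by simp only [mul_add, map_add]⟩

end IsBiadditive

theorem zsmul_coe_half_eq_zero_iff (m : ℤ) : m • ((1 / 2 : ℚ) : QZ) = 0 ↔ Even m := by
  rw [← AddCircle.coe_zsmul, AddCircle.coe_eq_zero_iff]
  constructor
  · rintro ⟨n, hn⟩
    have : (m : ℚ) = n + n := by simp only [zsmul_eq_mul, mul_one] at hn; linarith
    exact ⟨n, by exact_mod_cast this⟩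
  · rintro ⟨n, rfl⟩
    exact ⟨n, by simp only [zsmul_eq_mul]; push_cast; ring⟩

/-- The embedding `x ↦ x̄ / n` of `ℤ/nℤ` into `ℚ/ℤ` (the identity of `ℤ` when `n = 0`). -/
noncomputable def ZMod.toQZ (n : ℕ) : ZMod n →+ QZ :=
  ZMod.lift n ⟨zmultiplesHom QZ ((1 / n : ℚ) : QZ), by
    rcases eq_or_ne n 0 with rfl | hn
    · simp
    · simp [← AddCircle.coe_nsmul, hn]⟩

theorem ZMod.toQZ_natCast (n a : ℕ) : ZMod.toQZ n a = ((a / n : ℚ) : QZ) := by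
  rw [← Int.cast_natCast, ZMod.toQZ, ZMod.lift_coe]
  simp [div_eq_mul_one_div (a : ℚ)]

theorem two_pow_nsmul_qGen_one {ℓ : ℕ} (hℓ : 1 ≤ ℓ) :
    2 ^ ℓ • qGen ℓ 1 = ((1 / 2 : ℚ) : QZ) := by
  have : Fact (1 < 2 ^ ℓ) := ⟨Nat.one_lt_two_pow_iff.mpr (by omega)⟩
  rw [qGen, ZMod.val_one, ← AddCircle.coe_nsmul]
  congr 1
  rw [nsmul_eq_mul]
  push_cast
  field_simp
  ring

theorem two_nsmul_qGen (ℓ : ℕ) (x : ZMod (2 ^ ℓ)) :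
    2 • qGen ℓ x = ZMod.toQZ (2 ^ ℓ) (x * x) := by
  have hx : x * x = ((x.val ^ 2 : ℕ) : ZMod (2 ^ ℓ)) := by simp [sq]
  rw [hx, ZMod.toQZ_natCast, qGen, ← AddCircle.coe_nsmul]
  congr 1
  rw [nsmul_eq_mul]
  push_cast
  field_simp
  ring

theorem multiple_of_qGen_diagonal_iff_even (ℓ : ℕ) (hℓ : 1 ≤ ℓ) (m : ℤ) :
    (∃ ς : ZMod (2 ^ ℓ) → ZMod (2 ^ ℓ) → QZ, IsBiadditive ς ∧
      ∀ x : ZMod (2 ^ ℓ), m • qGen ℓ x = ς x x) ↔ Even m := by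
  constructor
  · rintro ⟨ς, hς, hdiag⟩
    have h_one : (2 ^ ℓ : ℕ) • (1 : ZMod (2 ^ ℓ)) = 0 := by simp
    have h_diag_one := hς.nsmul_eq_zero_of_nsmul_eq_zero h_one 1
    rwa [← hdiag, smul_comm, two_pow_nsmul_qGen_one hℓ, zsmul_coe_half_eq_zero_iff] at h_diag_one
  · rintro ⟨k, rfl⟩
    refine ⟨fun x y => k • ZMod.toQZ (2 ^ ℓ) (x * y), (IsBiadditive.of_mul _).zsmul k, fun x => ?_⟩
    show (k + k) • qGen ℓ x = k • ZMod.toQZ (2 ^ ℓ) (x * x)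
    rw [← two_nsmul_qGen, smul_comm, two_nsmul, add_smul]
end

section
/- Let F₁, F₂, F₃ be functors from the category of abelian groups to itself, each sending zero morphisms to zero morphisms, and let η : F₁ ⟶ F₂ and θ : F₂ ⟶ F₃ be natural transformations such that for every abelian group X the sequence 0 → F₁(X) → F₂(X) → F₃(X) → 0 is exact (η_X injective, θ_X surjective, ker θ_X = im η_X). For abelian groups A and B and i = 1,2,3, define the polarisation δF_i(A,B) as the kernel of the map F_i(A ⊕ B) → F_i(A) × F_i(B) induced by F_i applied to the two canonical projections. Then η and θ restrict to maps between the polarisations, and the resulting sequence 0 → δF₁(A,B) → δF₂(A,B) → δF₃(A,B) → 0 is exact. -/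
/-!
Injectivity and exactness in the middle are inherited from the sequence at `A ⊕ B`, using
injectivity of `η` at `A` and `B` to see that a preimage of a polarisation element is again in
the polarisation. For surjectivity, lift `w ∈ δF₃(A,B)` to any `v ∈ F₂(A ⊕ B)` and replace `v`
by its image under the natural idempotent `1 - F₂(i₁ p₁) - F₂(i₂ p₂)`: this lands in `δF₂(A,B)`
and `θ` carries it to the image of `w` under the same idempotent for `F₃`, which is `w` itself.
-/

open CategoryTheory Limits

universe u

namespace CategoryTheory

section Polarisation

variable {C : Type*} [Category C] [HasZeroMorphisms C] {A B : C} (c : BinaryBicone A B)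

def Functor.polarisation (F : C ⥤ AddCommGrpCat) : AddSubgroup (F.obj c.pt) :=
  (F.map c.fst).hom.ker ⊓ (F.map c.snd).hom.ker

variable {c} {F G : C ⥤ AddCommGrpCat}

@[simp]
lemma Functor.mem_polarisation {v : F.obj c.pt} :
    v ∈ F.polarisation c ↔ F.map c.fst v = 0 ∧ F.map c.snd v = 0 :=
  Iff.rfl

lemma NatTrans.app_mem_polarisation (φ : F ⟶ G) {v : F.obj c.pt} (hv : v ∈ F.polarisation c) :
    φ.app c.pt v ∈ G.polarisation c := by
  simp_all [← NatTrans.naturality_apply]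

lemma NatTrans.mem_polarisation_of_app_mem (φ : F ⟶ G) (hA : Function.Injective (φ.app A))
    (hB : Function.Injective (φ.app B)) {v : F.obj c.pt}
    (hv : φ.app c.pt v ∈ G.polarisation c) :
    v ∈ F.polarisation c := by
  rw [Functor.mem_polarisation, ← NatTrans.naturality_apply, ← NatTrans.naturality_apply] at hv
  exact ⟨hA (by simpa using hv.1), hB (by simpa using hv.2)⟩

variable (c F) in
def Functor.polarisationProj : F.obj c.pt ⟶ F.obj c.pt :=
  𝟙 _ - F.map (c.fst ≫ c.inl) - F.map (c.snd ≫ c.inr)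

lemma Functor.polarisationProj_comp_map_fst [F.PreservesZeroMorphisms] :
    F.polarisationProj c ≫ F.map c.fst = 0 := by
  simp only [polarisationProj, Preadditive.sub_comp, Category.id_comp, ← F.map_comp,
    Category.assoc, c.inl_fst, c.inr_fst, Category.comp_id, comp_zero, F.map_zero]
  abel

lemma Functor.polarisationProj_comp_map_snd [F.PreservesZeroMorphisms] :
    F.polarisationProj c ≫ F.map c.snd = 0 := by
  simp only [polarisationProj, Preadditive.sub_comp, Category.id_comp, ← F.map_comp,
    Category.assoc, c.inl_snd, c.inr_snd, Category.comp_id, comp_zero, F.map_zero]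
  abel

lemma Functor.polarisationProj_mem [F.PreservesZeroMorphisms] (v : F.obj c.pt) :
    F.polarisationProj c v ∈ F.polarisation c := by
  simp only [mem_polarisation, ← ConcreteCategory.comp_apply, polarisationProj_comp_map_fst,
    polarisationProj_comp_map_snd]
  exact ⟨rfl, rfl⟩

lemma Functor.polarisationProj_apply_of_mem {v : F.obj c.pt} (hv : v ∈ F.polarisation c) :
    F.polarisationProj c v = v := by
  simp_all [polarisationProj]

lemma NatTrans.polarisationProj_naturality (φ : F ⟶ G) :
    F.polarisationProj c ≫ φ.app c.pt = φ.app c.pt ≫ G.polarisationProj c := by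
  simp [Functor.polarisationProj]

lemma NatTrans.exists_preimage_mem_polarisation [F.PreservesZeroMorphisms] (φ : F ⟶ G)
    (hφ : Function.Surjective (φ.app c.pt)) {w : G.obj c.pt} (hw : w ∈ G.polarisation c) :
    ∃ v ∈ F.polarisation c, φ.app c.pt v = w := by
  obtain ⟨v, rfl⟩ := hφ w
  refine ⟨F.polarisationProj c v, F.polarisationProj_mem v, ?_⟩
  rw [← ConcreteCategory.comp_apply, polarisationProj_naturality, ConcreteCategory.comp_apply,
    G.polarisationProj_apply_of_mem hw]

end Polarisation

end CategoryTheory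

def AddCommGrpCat.prodBicone (A B : AddCommGrpCat.{u}) : BinaryBicone A B where
  pt := .of (A × B)
  fst := ofHom (AddMonoidHom.fst A B)
  snd := ofHom (AddMonoidHom.snd A B)
  inl := ofHom (AddMonoidHom.inl A B)
  inr := ofHom (AddMonoidHom.inr A B)

theorem polarisation_of_exact_sequence_is_exact_general
    (F₁ F₂ F₃ : AddCommGrpCat.{u} ⥤ AddCommGrpCat.{u})
    (hz₂ : ∀ X Y : AddCommGrpCat.{u}, F₂.map (0 : X ⟶ Y) = 0)
    (η : F₁ ⟶ F₂) (θ : F₂ ⟶ F₃)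
    (hinj : ∀ X : AddCommGrpCat.{u}, Function.Injective (η.app X))
    (hsurj : ∀ X : AddCommGrpCat.{u}, Function.Surjective (θ.app X))
    (hker : ∀ (X : AddCommGrpCat.{u}) (v : F₂.obj X),
      θ.app X v = 0 ↔ ∃ u : F₁.obj X, η.app X u = v) :
    ∀ A B : AddCommGrpCat.{u},
    let AB : AddCommGrpCat.{u} := AddCommGrpCat.of (↥A × ↥B)
    let p₁ : AB ⟶ A := AddCommGrpCat.ofHom (AddMonoidHom.fst ↥A ↥B)
    let p₂ : AB ⟶ B := AddCommGrpCat.ofHom (AddMonoidHom.snd ↥A ↥B)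
    -- the polarisations δFᵢ(A,B) = ker (Fᵢ(A⊕B) → Fᵢ(A) × Fᵢ(B))
    let δ₁ : Set (F₁.obj AB) := {v | F₁.map p₁ v = 0 ∧ F₁.map p₂ v = 0}
    let δ₂ : Set (F₂.obj AB) := {v | F₂.map p₁ v = 0 ∧ F₂.map p₂ v = 0}
    let δ₃ : Set (F₃.obj AB) := {v | F₃.map p₁ v = 0 ∧ F₃.map p₂ v = 0}
    -- η and θ restrict to the polarisations
    (∀ v ∈ δ₁, η.app AB v ∈ δ₂) ∧
    (∀ v ∈ δ₂, θ.app AB v ∈ δ₃) ∧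
    -- exactness of 0 → δF₁(A,B) → δF₂(A,B) → δF₃(A,B) → 0
    (∀ v w : F₁.obj AB, v ∈ δ₁ → w ∈ δ₁ → η.app AB v = η.app AB w → v = w) ∧
    (∀ v ∈ δ₂, (θ.app AB v = 0 ↔ ∃ u ∈ δ₁, η.app AB u = v)) ∧
    (∀ w ∈ δ₃, ∃ v ∈ δ₂, θ.app AB v = w) := by
  intro A B AB p₁ p₂ δ₁ δ₂ δ₃
  have : F₂.PreservesZeroMorphisms := ⟨hz₂⟩
  let c := AddCommGrpCat.prodBicone A B
  refine ⟨fun _ => η.app_mem_polarisation (c := c), fun _ => θ.app_mem_polarisation (c := c),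
    fun _ _ _ _ h => hinj AB h, fun v hv => ⟨fun hθv => ?_, ?_⟩,
    fun _ => θ.exists_preimage_mem_polarisation (c := c) (hsurj AB)⟩
  · obtain ⟨u, rfl⟩ := (hker AB v).1 hθv
    exact ⟨u, η.mem_polarisation_of_app_mem (c := c) (hinj A) (hinj B) hv, rfl⟩
  · rintro ⟨u, -, hu⟩
    exact (hker AB v).2 ⟨u, hu⟩

theorem polarisation_of_exact_sequence_is_exact
    (F₁ F₂ F₃ : AddCommGrpCat.{u} ⥤ AddCommGrpCat.{u})
    (hz₁ : ∀ X Y : AddCommGrpCat.{u}, F₁.map (0 : X ⟶ Y) = 0)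
    (hz₂ : ∀ X Y : AddCommGrpCat.{u}, F₂.map (0 : X ⟶ Y) = 0)
    (hz₃ : ∀ X Y : AddCommGrpCat.{u}, F₃.map (0 : X ⟶ Y) = 0)
    (η : F₁ ⟶ F₂) (θ : F₂ ⟶ F₃)
    (hinj : ∀ X : AddCommGrpCat.{u}, Function.Injective (η.app X))
    (hsurj : ∀ X : AddCommGrpCat.{u}, Function.Surjective (θ.app X))
    (hker : ∀ (X : AddCommGrpCat.{u}) (v : F₂.obj X),
      θ.app X v = 0 ↔ ∃ u : F₁.obj X, η.app X u = v) :
    ∀ A B : AddCommGrpCat.{u},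
    let AB : AddCommGrpCat.{u} := AddCommGrpCat.of (↥A × ↥B)
    let p₁ : AB ⟶ A := AddCommGrpCat.ofHom (AddMonoidHom.fst ↥A ↥B)
    let p₂ : AB ⟶ B := AddCommGrpCat.ofHom (AddMonoidHom.snd ↥A ↥B)
    -- the polarisations δFᵢ(A,B) = ker (Fᵢ(A⊕B) → Fᵢ(A) × Fᵢ(B))
    let δ₁ : Set (F₁.obj AB) := {v | F₁.map p₁ v = 0 ∧ F₁.map p₂ v = 0}
    let δ₂ : Set (F₂.obj AB) := {v | F₂.map p₁ v = 0 ∧ F₂.map p₂ v = 0}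
    let δ₃ : Set (F₃.obj AB) := {v | F₃.map p₁ v = 0 ∧ F₃.map p₂ v = 0}
    -- η and θ restrict to the polarisations
    (∀ v ∈ δ₁, η.app AB v ∈ δ₂) ∧
    (∀ v ∈ δ₂, θ.app AB v ∈ δ₃) ∧
    -- exactness of 0 → δF₁(A,B) → δF₂(A,B) → δF₃(A,B) → 0
    (∀ v w : F₁.obj AB, v ∈ δ₁ → w ∈ δ₁ → η.app AB v = η.app AB w → v = w) ∧
    (∀ v ∈ δ₂, (θ.app AB v = 0 ↔ ∃ u ∈ δ₁, η.app AB u = v)) ∧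
    (∀ w ∈ δ₃, ∃ v ∈ δ₂, θ.app AB v = w) :=
  polarisation_of_exact_sequence_is_exact_general F₁ F₂ F₃ hz₂ η θ hinj hsurj hker
end
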